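/- arXiv:2510.21506 — 4 statements merged into one kernel-verified Lean document; each statement's English description precedes it below -/
import Mathlib

section
/- Every countable collection Q of probability measures on {0,1}^ℕ is UME-learnable. -/
open MeasureTheory Filter

/-- The sup-distance `‖p − q‖_∞ = ⨆ j, |p j − q j|` between two vectors. -/
noncomputable def supDist {ι : Type*} (p q : ι → ℝ) : ℝ := ⨆ j, |p j - q j|

/-- The mean vector of a measure on `{0,1}^ι`: `Mean(μ)_j = μ {x | x j = 1}`. -/
noncomputable def meanVec {ι : Type*} (μ : Measure (ι → Bool)) : ι → ℝ :=
  fun j => (μ {x | x j = true}).toReal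

/-- A collection of distributions on `{0,1}^ι` is UME-learnable if there is a sequence of
measurable estimators `A n : ({0,1}^ι)^n → [0,1]^ι` with
`E_{S ∼ μ^n} ‖A n S − Mean μ‖_∞ → 0` for every `μ` in the collection. -/
def UMELearnable {ι : Type*} (Q : Set (Measure (ι → Bool))) : Prop :=
  ∃ A : (n : ℕ) → (Fin n → (ι → Bool)) → ι → ℝ,
    (∀ n, Measurable (A n)) ∧
    (∀ n S j, A n S j ∈ Set.Icc (0 : ℝ) 1) ∧
    ∀ μ ∈ Q,
      Tendsto (fun n : ℕ =>
          ∫ S, supDist (A n S) (meanVec μ) ∂(Measure.pi fun _ : Fin n => μ))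
        atTop (nhds 0)

open ProbabilityTheory Set Topology

/-!
Enumerate the candidate mean vectors as `M 0, M 1, …`. For distinct candidates `k, l` fix a
coordinate where they differ, with gap `g`. From sample size about `2 ^ l / g ^ 2` on, candidate
`k` must match the empirical mean at that coordinate up to `g / 2`, and the estimator outputs the
first candidate passing all its tests. By Chebyshev the true candidate `t` fails its test against
`l` with probability at most `1 / (n g ^ 2)`, which tends to `0` and is bounded by `2 ^ (-l)`; by
dominated convergence `t` fails some test with vanishing probability. Once the finitely many tests
between `t` and earlier candidates are active, the first consistent candidate has the same mean
as `t`, because two consistent candidates with different means would both be within half their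
gap of the same empirical mean. The error is at most `1`, so its expectation is bounded by the
probability that `t` fails.
-/

section SampleMean

variable {Ω : Type*} [MeasurableSpace Ω]

noncomputable def sampleMean (X : Ω → ℝ) {n : ℕ} (ω : Fin n → Ω) : ℝ := (∑ i, X (ω i)) / n

lemma measurable_sampleMean {X : Ω → ℝ} (hX : Measurable X) (n : ℕ) :
    Measurable (sampleMean X (n := n)) := by
  unfold sampleMean
  fun_prop

lemma meas_ge_sampleMean_le_variance_div {μ : Measure Ω} [IsProbabilityMeasure μ] {X : Ω → ℝ}
    (hX : MemLp X 2 μ) {n : ℕ} (hn : n ≠ 0) {c : ℝ} (hc : 0 < c) :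
    Measure.pi (fun _ : Fin n => μ) {ω | c ≤ |sampleMean X ω - μ[X]|}
      ≤ ENNReal.ofReal (Var[X; μ] / (n * c ^ 2)) := by
  set ν := Measure.pi fun _ : Fin n => μ
  set Y : (Fin n → Ω) → ℝ := ∑ i : Fin n, fun ω => X (ω i) with hYdef
  have hY : MemLp Y 2 ν :=
    memLp_finsetSum' _ fun i _ => hX.comp_measurePreserving (measurePreserving_eval _ i)
  have hmean : ν[Y] = (n : ℝ) * μ[X] := by
    calc ν[Y] = ∑ i, ∫ ω, X (ω i) ∂ν := by
          simp only [hYdef, Finset.sum_apply]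
          exact integral_finsetSum _ fun i _ =>
            (hX.comp_measurePreserving (measurePreserving_eval _ i)).integrable one_le_two
      _ = (n : ℝ) * μ[X] := by
          simp [ν, integral_comp_eval (μ := fun _ : Fin n => μ) hX.aestronglyMeasurable]
  have hvar : Var[Y; ν] = (n : ℝ) * Var[X; μ] := by
    rw [variance_sum_pi (fun _ => hX)]
    simp
  have hn' : (0 : ℝ) < n := by positivity
  have hset : {ω | c ≤ |sampleMean X ω - μ[X]|} = {ω | (n : ℝ) * c ≤ |Y ω - ν[Y]|} := by
    ext ω
    have : Y ω - ν[Y] = (n : ℝ) * (sampleMean X ω - μ[X]) := by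
      rw [hmean, sampleMean, hYdef, Finset.sum_apply]
      field_simp
    simp only [mem_ofPred_eq]
    rw [this, abs_mul, abs_of_pos hn', mul_le_mul_iff_right₀ hn']
  calc ν {ω | c ≤ |sampleMean X ω - μ[X]|}
      ≤ ENNReal.ofReal (Var[Y; ν] / (n * c) ^ 2) :=
        hset ▸ meas_ge_le_variance_div_sq hY (by positivity)
    _ = ENNReal.ofReal (Var[X; μ] / (n * c ^ 2)) := by
      rw [hvar]
      congr 1
      field_simp

end SampleMean

section SupDist

variable {ι : Type*}

lemma supDist_self (p : ι → ℝ) : supDist p p = 0 := by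
  simp [supDist]

lemma supDist_nonneg (p q : ι → ℝ) : 0 ≤ supDist p q :=
  Real.iSup_nonneg fun _ => abs_nonneg _

lemma supDist_le_one {p q : ι → ℝ} (hp : ∀ j, p j ∈ Icc 0 1) (hq : ∀ j, q j ∈ Icc 0 1) :
    supDist p q ≤ 1 :=
  Real.iSup_le (fun j => abs_sub_le_iff.2
    ⟨by linarith [(hp j).2, (hq j).1], by linarith [(hp j).1, (hq j).2]⟩) zero_le_one

end SupDist

section Coordinates

variable {ι : Type*}

noncomputable def coordIndicator (j : ι) : (ι → Bool) → ℝ := {x | x j = true}.indicator 1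

lemma measurableSet_apply_eq_true (j : ι) : MeasurableSet {x : ι → Bool | x j = true} :=
  measurableSet_eq_fun (measurable_pi_apply j) measurable_const

lemma measurable_coordIndicator (j : ι) : Measurable (coordIndicator j) :=
  measurable_one.indicator (measurableSet_apply_eq_true j)

lemma coordIndicator_mem_Icc (j : ι) (x : ι → Bool) : coordIndicator j x ∈ Icc (0 : ℝ) 1 := by
  by_cases h : x j = true <;> simp [coordIndicator, h]

variable (μ : Measure (ι → Bool)) [IsProbabilityMeasure μ]

lemma meanVec_mem_Icc (j : ι) : meanVec μ j ∈ Icc 0 1 :=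
  ⟨measureReal_nonneg, measureReal_le_one⟩

lemma meas_ge_sampleMean_coordIndicator_le {n : ℕ} (hn : n ≠ 0) (j : ι) {c : ℝ} (hc : 0 < c) :
    Measure.pi (fun _ : Fin n => μ) {S | c ≤ |sampleMean (coordIndicator j) S - meanVec μ j|}
      ≤ ENNReal.ofReal (4 * n * c ^ 2)⁻¹ := by
  have hbdd : ∀ᵐ x ∂μ, coordIndicator j x ∈ Icc 0 1 := ae_of_all μ (coordIndicator_mem_Icc j)
  have hmeas := (measurable_coordIndicator j).aemeasurable (μ := μ)
  have hmean : μ[coordIndicator j] = meanVec μ j :=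
    integral_indicator_one (measurableSet_apply_eq_true j)
  have hvar : Var[coordIndicator j; μ] ≤ 1 / 4 := by
    convert variance_le_sq_of_bounded hbdd hmeas using 1
    norm_num
  calc _ ≤ ENNReal.ofReal (Var[coordIndicator j; μ] / (n * c ^ 2)) :=
        hmean ▸ meas_ge_sampleMean_le_variance_div
          (memLp_of_bounded hbdd hmeas.aestronglyMeasurable 2) hn hc
    _ ≤ ENNReal.ofReal (4 * n * c ^ 2)⁻¹ := by
      gcongr
      calc Var[coordIndicator j; μ] / (n * c ^ 2) ≤ 1 / 4 / (n * c ^ 2) := by gcongr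
        _ = (4 * n * c ^ 2)⁻¹ := by ring

end Coordinates

section Separation

variable {ι : Type*} [Nonempty ι]

noncomputable def sepCoord (p q : ι → ℝ) : ι := Classical.epsilon fun j => p j ≠ q j

lemma sepCoord_comm (p q : ι → ℝ) : sepCoord p q = sepCoord q p := by
  simp only [sepCoord, ne_comm]

lemma apply_sepCoord_ne {p q : ι → ℝ} (h : p ≠ q) : p (sepCoord p q) ≠ q (sepCoord p q) :=
  Classical.epsilon_spec (Function.ne_iff.mp h)

noncomputable def sepGap (p q : ι → ℝ) : ℝ := |p (sepCoord p q) - q (sepCoord p q)|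

lemma sepGap_comm (p q : ι → ℝ) : sepGap p q = sepGap q p := by
  rw [sepGap, sepGap, sepCoord_comm, abs_sub_comm]

lemma sepGap_pos {p q : ι → ℝ} (h : p ≠ q) : 0 < sepGap p q :=
  abs_pos.mpr (sub_ne_zero.mpr (apply_sepCoord_ne h))

end Separation

section Estimator

variable {ι : Type*} [Nonempty ι] (M : ℕ → ι → ℝ)

noncomputable def testSize (k l : ℕ) : ℕ := ⌈2 ^ l / sepGap (M k) (M l) ^ 2⌉₊

def Consistent {n : ℕ} (S : Fin n → ι → Bool) (k : ℕ) : Prop :=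
  ∀ l, M k ≠ M l → testSize M k l ≤ n →
    |sampleMean (coordIndicator (sepCoord (M k) (M l))) S - M k (sepCoord (M k) (M l))|
      < sepGap (M k) (M l) / 2

lemma measurableSet_consistent (n k : ℕ) :
    MeasurableSet {S : Fin n → ι → Bool | Consistent M S k} := by
  simp only [Consistent, ofPred_forall]
  refine .iInter fun l => .iInter fun _ => .iInter fun _ => measurableSet_lt ?_ measurable_const
  exact ((measurable_sampleMean (measurable_coordIndicator _) n).sub_const _).abs

open Classical in
noncomputable def selectIndex {n : ℕ} (S : Fin n → ι → Bool) : ℕ :=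
  Nat.find (⟨n, .inl le_rfl⟩ : ∃ k, n ≤ k ∨ Consistent M S k)

open Classical in
lemma measurable_selectIndex (n : ℕ) : Measurable (selectIndex M (n := n)) :=
  measurable_find _ fun k =>
    (MeasurableSet.const (n ≤ k)).union (measurableSet_consistent M n k)

lemma selectIndex_le {n k : ℕ} {S : Fin n → ι → Bool} (h : Consistent M S k) :
    selectIndex M S ≤ k := by
  classical
  exact Nat.find_min' _ (.inr h)

lemma le_selectIndex_or_consistent {n : ℕ} (S : Fin n → ι → Bool) :
    n ≤ selectIndex M S ∨ Consistent M S (selectIndex M S) := by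
  classical
  exact Nat.find_spec (⟨n, .inl le_rfl⟩ : ∃ k, n ≤ k ∨ Consistent M S k)

noncomputable def estimator (n : ℕ) (S : Fin n → ι → Bool) : ι → ℝ := M (selectIndex M S)

lemma measurable_estimator (n : ℕ) : Measurable (estimator M n) :=
  measurable_from_nat.comp (measurable_selectIndex M n)

lemma estimator_eq_of_consistent {n t : ℕ} {S : Fin n → ι → Bool} (htn : t < n)
    (hsize : ∀ c ≤ t, testSize M c t ≤ n ∧ testSize M t c ≤ n) (ht : Consistent M S t) :
    estimator M n S = M t := by
  set c := selectIndex M S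
  have hct : c ≤ t := selectIndex_le M ht
  have hc : Consistent M S c := (le_selectIndex_or_consistent M S).resolve_left (by omega)
  by_contra hne
  set j := sepCoord (M c) (M t)
  set m := sampleMean (coordIndicator j) S
  have hcj : |m - M c j| < sepGap (M c) (M t) / 2 := hc t hne (hsize c hct).1
  have htj : |m - M t j| < sepGap (M c) (M t) / 2 := by
    have := ht c (Ne.symm hne) (hsize c hct).2
    rwa [sepCoord_comm, sepGap_comm] at this
  refine lt_irrefl (sepGap (M c) (M t)) ?_
  calc sepGap (M c) (M t) = |M c j - M t j| := rfl
    _ ≤ |M c j - m| + |m - M t j| := abs_sub_le _ _ _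
    _ < sepGap (M c) (M t) / 2 + sepGap (M c) (M t) / 2 := by
      rw [abs_sub_comm]
      exact add_lt_add hcj htj
    _ = sepGap (M c) (M t) := add_halves _

end Estimator

section Failure

variable {ι : Type*} [Nonempty ι] (M : ℕ → ι → ℝ)

open Classical in
noncomputable def failBound (t n l : ℕ) : ℝ :=
  if M t ≠ M l ∧ testSize M t l ≤ n then (n * sepGap (M t) (M l) ^ 2)⁻¹ else 0

lemma failBound_nonneg (t n l : ℕ) : 0 ≤ failBound M t n l := by
  unfold failBound
  split_ifs <;> positivity

lemma failBound_le_half_pow (t n l : ℕ) : failBound M t n l ≤ (1 / 2) ^ l := by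
  unfold failBound
  split_ifs with h
  · have hgap := sepGap_pos h.1
    have hsize : 2 ^ l / sepGap (M t) (M l) ^ 2 ≤ n := (Nat.le_ceil _).trans (Nat.cast_le.2 h.2)
    rw [div_le_iff₀ (by positivity)] at hsize
    rw [one_div_pow, one_div]
    exact inv_anti₀ (by positivity) hsize
  · positivity

lemma failBound_le_inv_mul_inv (t n l : ℕ) :
    failBound M t n l ≤ (sepGap (M t) (M l) ^ 2)⁻¹ * (n : ℝ)⁻¹ := by
  unfold failBound
  split_ifs
  · rw [mul_inv, mul_comm]
  · positivity

lemma tendsto_failBound (t l : ℕ) : Tendsto (fun n => failBound M t n l) atTop (𝓝 0) := by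
  refine squeeze_zero (fun n => failBound_nonneg M t n l)
    (fun n => failBound_le_inv_mul_inv M t n l) ?_
  simpa using (tendsto_inv_atTop_nhds_zero_nat (𝕜 := ℝ)).const_mul (sepGap (M t) (M l) ^ 2)⁻¹

lemma tendsto_tsum_failBound (t : ℕ) :
    Tendsto (fun n => ∑' l, failBound M t n l) atTop (𝓝 0) := by
  simpa using tendsto_tsum_of_dominated_convergence summable_geometric_two
    (tendsto_failBound M t) (.of_forall fun n l => by
      rw [Real.norm_of_nonneg (failBound_nonneg M t n l)]
      exact failBound_le_half_pow M t n l)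

lemma measureReal_not_consistent_le (μ : Measure (ι → Bool)) [IsProbabilityMeasure μ] {t : ℕ}
    (ht : M t = meanVec μ) (n : ℕ) :
    (Measure.pi fun _ : Fin n => μ).real {S | ¬Consistent M S t} ≤ ∑' l, failBound M t n l := by
  set ν := Measure.pi fun _ : Fin n => μ
  let fail (l : ℕ) : Set (Fin n → ι → Bool) :=
    {S | M t ≠ M l ∧ testSize M t l ≤ n ∧ sepGap (M t) (M l) / 2 ≤
      |sampleMean (coordIndicator (sepCoord (M t) (M l))) S - M t (sepCoord (M t) (M l))|}
  have hsub : {S | ¬Consistent M S t} ⊆ ⋃ l, fail l := by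
    intro S hS
    simp only [Consistent, mem_ofPred_eq, not_forall, not_lt] at hS
    obtain ⟨l, hne, hsize, hdev⟩ := hS
    exact mem_iUnion.2 ⟨l, hne, hsize, hdev⟩
  have hfail (l : ℕ) : ν (fail l) ≤ ENNReal.ofReal (failBound M t n l) := by
    unfold failBound
    split_ifs with h
    · have hgap := sepGap_pos h.1
      have hn : n ≠ 0 := ((Nat.ceil_pos.2 (by positivity)).trans_le h.2).ne'
      calc ν (fail l)
          ≤ ν {S | sepGap (M t) (M l) / 2 ≤ |sampleMean (coordIndicator (sepCoord (M t) (M l))) S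
              - meanVec μ (sepCoord (M t) (M l))|} := measure_mono fun S hS => ht ▸ hS.2.2
        _ ≤ ENNReal.ofReal (4 * n * (sepGap (M t) (M l) / 2) ^ 2)⁻¹ :=
          meas_ge_sampleMean_coordIndicator_le μ hn _ (half_pos hgap)
        _ = ENNReal.ofReal (n * sepGap (M t) (M l) ^ 2)⁻¹ := by ring_nf
    · rw [ENNReal.ofReal_zero]
      exact (measure_mono_null (fun S hS => absurd ⟨hS.1, hS.2.1⟩ h) measure_empty).le
  have hsum : Summable (failBound M t n) :=
    summable_geometric_two.of_nonneg_of_le (failBound_nonneg M t n) (failBound_le_half_pow M t n)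
  refine ENNReal.toReal_le_of_le_ofReal (tsum_nonneg (failBound_nonneg M t n)) ?_
  calc ν {S | ¬Consistent M S t} ≤ ∑' l, ν (fail l) :=
        (measure_mono hsub).trans (measure_iUnion_le _)
    _ ≤ ∑' l, ENNReal.ofReal (failBound M t n l) := ENNReal.tsum_le_tsum hfail
    _ = ENNReal.ofReal (∑' l, failBound M t n l) :=
      (ENNReal.ofReal_tsum_of_nonneg (failBound_nonneg M t n) hsum).symm

end Failure

section Learning

variable {ι : Type*} [Nonempty ι] {M : ℕ → ι → ℝ}

lemma integral_supDist_estimator_le (hM : ∀ k j, M k j ∈ Icc 0 1) (μ : Measure (ι → Bool))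
    [IsProbabilityMeasure μ] {n t : ℕ} (htn : t < n)
    (hsize : ∀ c ≤ t, testSize M c t ≤ n ∧ testSize M t c ≤ n) :
    ∫ S, supDist (estimator M n S) (M t) ∂(Measure.pi fun _ : Fin n => μ)
      ≤ (Measure.pi fun _ : Fin n => μ).real {S | ¬Consistent M S t} := by
  have hbad : MeasurableSet {S : Fin n → ι → Bool | ¬Consistent M S t} :=
    (measurableSet_consistent M n t).compl
  rw [← integral_indicator_one hbad]
  refine integral_mono_of_nonneg (.of_forall fun S => supDist_nonneg _ _)
    ((integrable_const 1).indicator hbad) (.of_forall fun S => ?_)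
  dsimp only
  by_cases hS : Consistent M S t
  · rw [estimator_eq_of_consistent M htn hsize hS, supDist_self]
    exact indicator_nonneg (fun _ _ => zero_le_one) S
  · rw [indicator_of_mem hS]
    exact supDist_le_one (hM _) (hM t)

theorem tendsto_integral_supDist_estimator (hM : ∀ k j, M k j ∈ Icc 0 1)
    (μ : Measure (ι → Bool)) [IsProbabilityMeasure μ] {t : ℕ} (ht : M t = meanVec μ) :
    Tendsto (fun n =>
        ∫ S, supDist (estimator M n S) (meanVec μ) ∂(Measure.pi fun _ : Fin n => μ))
      atTop (𝓝 0) := by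
  have hbad : Tendsto (fun n => (Measure.pi fun _ : Fin n => μ).real {S | ¬Consistent M S t})
      atTop (𝓝 0) :=
    squeeze_zero (fun n => measureReal_nonneg) (measureReal_not_consistent_le M μ ht)
      (tendsto_tsum_failBound M t)
  have hsize : ∀ᶠ n in atTop, ∀ c ∈ Iic t, testSize M c t ≤ n ∧ testSize M t c ≤ n :=
    (finite_Iic t).eventually_all.2 fun c _ =>
      (eventually_ge_atTop _).and (eventually_ge_atTop _)
  rw [← ht]
  refine squeeze_zero' (.of_forall fun n => integral_nonneg fun S => supDist_nonneg _ _) ?_ hbad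
  filter_upwards [eventually_gt_atTop t, hsize] with n htn hsize
  exact integral_supDist_estimator_le hM μ htn hsize

theorem UMELearnable.of_meanVec_mem_range (hM : ∀ k j, M k j ∈ Icc 0 1)
    {Q : Set (Measure (ι → Bool))}
    (hQ : ∀ μ ∈ Q, IsProbabilityMeasure μ ∧ meanVec μ ∈ range M) : UMELearnable Q := by
  refine ⟨estimator M, measurable_estimator M, fun n S => hM _, fun μ hμ => ?_⟩
  obtain ⟨hprob, t, ht⟩ := hQ μ hμ
  exact tendsto_integral_supDist_estimator hM μ ht

end Learning

/-- Every countable collection of probability measures on `{0,1}^ℕ` is UME-learnable. -/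
theorem countable_UMELearnable (Q : Set (Measure (ℕ → Bool)))
    (hQcount : Q.Countable) (hQprob : ∀ μ ∈ Q, IsProbabilityMeasure μ) :
    UMELearnable Q := by
  obtain ⟨M, hM⟩ := ((hQcount.image meanVec).insert 0).exists_eq_range (insert_nonempty _ _)
  refine UMELearnable.of_meanVec_mem_range (M := M) (fun k j => ?_) fun μ hμ =>
    ⟨hQprob μ hμ, hM ▸ mem_insert_of_mem _ (mem_image_of_mem _ hμ)⟩
  obtain h0 | ⟨μ, hμ, hk⟩ := hM ▸ mem_range_self k
  · simp [h0]
  · have := hQprob μ hμ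
    exact hk ▸ meanVec_mem_Icc μ j
end

section
/- Let γ > 0 and let Q be a collection of probability measures on {0,1}^ℕ such that Mean(Q) has no countable 3γ-cover. Then there exist a coordinate i ∈ ℕ, a value r ∈ (0,1), and subcollections Q_1, Q_2 ⊆ Q such that neither Mean(Q_1) nor Mean(Q_2) has a countable 3γ-cover, every q ∈ Mean(Q_1) satisfies q_i ≥ r + γ, and every q ∈ Mean(Q_2) satisfies q_i ≤ r − γ. -/
open MeasureTheory Filter

/-- A set `M ⊆ [0,1]^ι` has a countable `ε`-cover: a countable `D ⊆ [0,1]^ι` such that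
every `q ∈ M` is within sup-distance `< ε` of some `p ∈ D`. -/
def HasCountableCover {ι : Type*} (M : Set (ι → ℝ)) (ε : ℝ) : Prop :=
  ∃ D : Set (ι → ℝ), D.Countable ∧ (∀ p ∈ D, ∀ j, p j ∈ Set.Icc (0 : ℝ) 1) ∧
    ∀ q ∈ M, ∃ p ∈ D, supDist q p < ε

/-!
Suppose that for every coordinate `i` and every `r ∈ (0,1)` one of the two slabs
`{q_i ≥ r + γ}`, `{q_i ≤ r − γ}` of `Mean(Q)` has a countable `3γ`-cover. Taking `r` rational,
the union `R` of these countably many covered slabs has a countable cover. Two points outside `R`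
differ by at most `2γ` in every coordinate: if `p_i − q_i > 2γ`, a rational `r` with
`q_i + γ < r < p_i − γ` puts `p` or `q` in a covered slab. So the rest of `Mean(Q)` is covered
by any single one of its points, and `Mean(Q)` has a countable `3γ`-cover.
-/

lemma meanVec_mem_Icc_s13 {ι : Type*} (μ : Measure (ι → Bool)) [IsProbabilityMeasure μ] (j : ι) :
    meanVec μ j ∈ Set.Icc (0 : ℝ) 1 :=
  ⟨measureReal_nonneg, measureReal_le_one⟩

lemma supDist_le {ι : Type*} {p q : ι → ℝ} {c : ℝ} (hc : 0 ≤ c) (h : ∀ j, |p j - q j| ≤ c) :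
    supDist p q ≤ c :=
  Real.iSup_le h hc

lemma exists_rat_separating {a b γ : ℝ} (ha : 0 ≤ a) (hb : b ≤ 1) (hγ : 0 ≤ γ)
    (hab : 2 * γ < b - a) : ∃ s : ℚ, (s : ℝ) ∈ Set.Ioo (0 : ℝ) 1 ∧ a ≤ s - γ ∧ s + γ ≤ b := by
  obtain ⟨s, has, hsb⟩ := exists_rat_btwn (show a + γ < b - γ by linarith)
  exact ⟨s, ⟨by linarith, by linarith⟩, by linarith, by linarith⟩

namespace HasCountableCover

variable {ι : Type*} {M N : Set (ι → ℝ)} {ε : ℝ}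

lemma mono (hMN : M ⊆ N) (hN : HasCountableCover N ε) : HasCountableCover M ε :=
  let ⟨D, hD, hD01, hcov⟩ := hN
  ⟨D, hD, hD01, fun q hq => hcov q (hMN hq)⟩

lemma empty : HasCountableCover (∅ : Set (ι → ℝ)) ε :=
  ⟨∅, Set.countable_empty, by simp, by simp⟩

lemma iUnion {κ : Type*} [Countable κ] {M : κ → Set (ι → ℝ)}
    (h : ∀ k, HasCountableCover (M k) ε) : HasCountableCover (⋃ k, M k) ε := by
  choose D hD hD01 hcov using h
  refine ⟨⋃ k, D k, Set.countable_iUnion hD, ?_, ?_⟩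
  · simp only [Set.mem_iUnion]
    rintro p ⟨k, hp⟩
    exact hD01 k p hp
  · simp only [Set.mem_iUnion]
    rintro q ⟨k, hq⟩
    obtain ⟨p, hp, hqp⟩ := hcov k q hq
    exact ⟨p, ⟨k, hp⟩, hqp⟩

lemma union (hM : HasCountableCover M ε) (hN : HasCountableCover N ε) :
    HasCountableCover (M ∪ N) ε := by
  rw [Set.union_eq_iUnion]
  exact iUnion (Bool.forall_bool.2 ⟨hN, hM⟩)

lemma of_forall_supDist_lt (hM : ∀ q ∈ M, ∀ j, q j ∈ Set.Icc (0 : ℝ) 1)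
    (h : ∀ p ∈ M, ∀ q ∈ M, supDist p q < ε) : HasCountableCover M ε := by
  rcases M.eq_empty_or_nonempty with rfl | ⟨p, hp⟩
  · exact empty
  · exact ⟨{p}, Set.countable_singleton p, by simpa using hM p hp,
      fun q hq => ⟨p, rfl, h q hq p hp⟩⟩

lemma of_forall_slab [Countable ι] {γ : ℝ} (hM : ∀ q ∈ M, ∀ j, q j ∈ Set.Icc (0 : ℝ) 1)
    (hγ : 0 ≤ γ) (hε : 2 * γ < ε)
    (h : ∀ i, ∀ r ∈ Set.Ioo (0 : ℝ) 1, HasCountableCover (M ∩ {q | r + γ ≤ q i}) ε ∨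
      HasCountableCover (M ∩ {q | q i ≤ r - γ}) ε) :
    HasCountableCover M ε := by
  have hslab : ∀ i (s : ℚ), ∃ T, HasCountableCover T ε ∧ ((s : ℝ) ∈ Set.Ioo (0 : ℝ) 1 →
      M ∩ {q | s + γ ≤ q i} ⊆ T ∨ M ∩ {q | q i ≤ s - γ} ⊆ T) := by
    intro i s
    by_cases hs : (s : ℝ) ∈ Set.Ioo (0 : ℝ) 1
    · rcases h i s hs with hcov | hcov
      · exact ⟨_, hcov, fun _ => Or.inl le_rfl⟩
      · exact ⟨_, hcov, fun _ => Or.inr le_rfl⟩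
    · exact ⟨∅, empty, fun hs' => absurd hs' hs⟩
  choose T hTcov hTslab using hslab
  set R := ⋃ (i) (s : ℚ), T i s
  have hR : HasCountableCover R ε := iUnion fun i => iUnion (hTcov i)
  have hclose : ∀ p ∈ M \ R, ∀ q ∈ M \ R, ∀ j, p j - q j ≤ 2 * γ := by
    rintro p ⟨hpM, hpR⟩ q ⟨hqM, hqR⟩ j
    by_contra! hgt
    obtain ⟨s, hs, hqs, hsp⟩ :=
      exists_rat_separating (hM q hqM j).1 (hM p hpM j).2 hγ hgt
    rcases hTslab j s hs with hsub | hsub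
    · exact hpR (Set.mem_iUnion₂.2 ⟨j, s, hsub ⟨hpM, hsp⟩⟩)
    · exact hqR (Set.mem_iUnion₂.2 ⟨j, s, hsub ⟨hqM, hqs⟩⟩)
  have hrest : HasCountableCover (M \ R) ε :=
    of_forall_supDist_lt (fun q hq => hM q hq.1) fun p hp q hq =>
      (supDist_le (by linarith) fun j =>
        abs_sub_le_iff.2 ⟨hclose p hp q hq j, hclose q hq p hp j⟩).trans_lt hε
  refine mono ?_ (hR.union hrest)
  rw [Set.union_sdiff_self]
  exact Set.subset_union_right

end HasCountableCover

/-- If `Mean(Q)` has no countable `3γ`-cover, then there are a coordinate `i`, a value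
`r ∈ (0,1)`, and subcollections `Q₁, Q₂ ⊆ Q` such that neither `Mean(Q₁)` nor `Mean(Q₂)`
has a countable `3γ`-cover, every `q ∈ Mean(Q₁)` satisfies `q i ≥ r + γ`, and every
`q ∈ Mean(Q₂)` satisfies `q i ≤ r − γ`. -/
theorem subset_selection (γ : ℝ) (hγ : 0 < γ) (Q : Set (Measure (ℕ → Bool)))
    (hQprob : ∀ μ ∈ Q, IsProbabilityMeasure μ)
    (hnc : ¬ HasCountableCover (meanVec '' Q) (3 * γ)) :
    ∃ (i : ℕ) (r : ℝ), r ∈ Set.Ioo (0 : ℝ) 1 ∧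
      ∃ Q₁ Q₂ : Set (Measure (ℕ → Bool)), Q₁ ⊆ Q ∧ Q₂ ⊆ Q ∧
        ¬ HasCountableCover (meanVec '' Q₁) (3 * γ) ∧
        ¬ HasCountableCover (meanVec '' Q₂) (3 * γ) ∧
        (∀ q ∈ meanVec '' Q₁, r + γ ≤ q i) ∧
        (∀ q ∈ meanVec '' Q₂, q i ≤ r - γ) := by
  have hmean : ∀ q ∈ meanVec '' Q, ∀ j, q j ∈ Set.Icc (0 : ℝ) 1 := by
    rintro _ ⟨μ, hμ, rfl⟩ j
    have := hQprob μ hμ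
    exact meanVec_mem_Icc_s13 μ j
  obtain ⟨i, r, hr, hupper, hlower⟩ : ∃ (i : ℕ), ∃ r ∈ Set.Ioo (0 : ℝ) 1,
      ¬ HasCountableCover (meanVec '' Q ∩ {q | r + γ ≤ q i}) (3 * γ) ∧
      ¬ HasCountableCover (meanVec '' Q ∩ {q | q i ≤ r - γ}) (3 * γ) := by
    by_contra! h
    exact hnc (HasCountableCover.of_forall_slab hmean hγ.le (by linarith)
      fun i r hr => or_iff_not_imp_left.2 (h i r hr))
  refine ⟨i, r, hr, Q ∩ meanVec ⁻¹' {q | r + γ ≤ q i}, Q ∩ meanVec ⁻¹' {q | q i ≤ r - γ},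
    Set.inter_subset_left, Set.inter_subset_left, ?_, ?_, ?_, ?_⟩ <;>
    simp only [Set.image_inter_preimage]
  · exact hupper
  · exact hlower
  · exact fun q hq => hq.2
  · exact fun q hq => hq.2
end

section
/- Let μ = Prod(q) be the product measure on {0,1}^ℕ with q_j = 1/2 for all j, and fix any sample size n ≥ 1. Then, with probability 1 over n i.i.d. samples X^(1),…,X^(n) ∼ μ, there exist infinitely many coordinates j at which all n samples are equal (all 0 or all 1); consequently sup_j |q̂_j − 1/2| = 1/2 almost surely, where q̂_j = (1/n)Σ_{i=1}^n X^(i)_j is the empirical mean, and therefore E_{S∼μ^n} sup_j |q̂_j − 1/2| = 1/2 for every n, so the empirical mean estimator does not converge uniformly even for the singleton collection {μ}. -/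
open MeasureTheory Filter

/-- `μ = Prod q`: the product probability measure on `{0,1}^ι` with independent
coordinates, the `j`-th coordinate having mean `q j`. -/
def IsBernoulliProduct {ι : Type*} (q : ι → ℝ) (μ : Measure (ι → Bool)) : Prop :=
  IsProbabilityMeasure μ ∧
  ∀ (F : Finset ι) (f : ι → Bool),
    μ {x | ∀ j ∈ F, x j = f j} = ∏ j ∈ F, ENNReal.ofReal (if f j then q j else 1 - q j)

/-- The empirical mean at coordinate `j` of `n` samples `S : Fin n → {0,1}^ℕ`. -/
noncomputable def empMean (n : ℕ) (S : Fin n → (ℕ → Bool)) (j : ℕ) : ℝ :=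
  (∑ i : Fin n, if S i j then (1 : ℝ) else 0) / n

/-! Under `μ^n` the columns `(S i j)_i` are independent and uniform on `{0,1}^n`, so a column is
constant with probability `2^(1-n) > 0`. A union bound over the patterns of nonconstant columns
shows that `m` consecutive columns are all nonconstant with probability at most
`(1 - 2^(1-n))^m → 0`, so almost surely constant columns occur infinitely often. At a constant
column the empirical mean is `0` or `1`, attaining the trivial bound `|q̂_j - 1/2| ≤ 1/2`. -/

open Function ENNReal

theorem IsBernoulliProduct.measure_forall_apply_eq_half_pow {ι α : Type*} [Fintype α]
    {μ : Measure (ι → Bool)} (hμ : IsBernoulliProduct (fun _ : ι => (1 : ℝ) / 2) μ)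
    {e : α → ι} (he : Injective e) (c : α → Bool) :
    μ {x | ∀ a, x (e a) = c a} = 2⁻¹ ^ Fintype.card α := by
  have h := hμ.2 (Finset.univ.map ⟨e, he⟩) (extend e c fun _ => false)
  simp only [Finset.mem_map, Finset.mem_univ, true_and, Embedding.coeFn_mk,
    forall_exists_index, forall_apply_eq_imp_iff, he.extend_apply, Finset.prod_map] at h
  have half : ENNReal.ofReal (1 / 2) = 2⁻¹ := by
    rw [one_div, ENNReal.ofReal_inv_of_pos two_pos, ofReal_ofNat]
  rw [h]
  norm_num [half]

theorem card_nonconstant_lt_two_pow (ι : Type*) [Fintype ι] [DecidableEq ι] :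
    Fintype.card {c : ι → Bool // ¬ ∀ i i', c i = c i'} < 2 ^ Fintype.card ι := by
  simpa using Fintype.card_subtype_lt (p := fun c : ι → Bool => ¬ ∀ i i', c i = c i')
    (x := fun _ => true) (by simp)

theorem IsBernoulliProduct.measure_pi_forall_not_agree_le {ι κ α : Type*} [Fintype ι]
    [DecidableEq ι] [Fintype α] [DecidableEq α] {μ : Measure (κ → Bool)}
    (hμ : IsBernoulliProduct (fun _ : κ => (1 : ℝ) / 2) μ) {e : α → κ} (he : Injective e) :
    Measure.pi (fun _ : ι => μ) {S | ∀ a, ¬ ∀ i i', S i (e a) = S i' (e a)} ≤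
      (Fintype.card {c : ι → Bool // ¬ ∀ i i', c i = c i'} * 2⁻¹ ^ Fintype.card ι) ^
        Fintype.card α := by
  have := hμ.1
  let Col := {c : ι → Bool // ¬ ∀ i i', c i = c i'}
  have cover : {S : ι → κ → Bool | ∀ a, ¬ ∀ i i', S i (e a) = S i' (e a)} ⊆
      ⋃ c : α → Col, Set.univ.pi fun i => {x | ∀ a, x (e a) = (c a).1 i} := by
    intro S hS
    exact Set.mem_iUnion.2 ⟨fun a => ⟨fun i => S i (e a), hS a⟩, fun i _ a => rfl⟩
  calc _ ≤ ∑ c : α → Col, Measure.pi (fun _ : ι => μ)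
          (Set.univ.pi fun i => {x | ∀ a, x (e a) = (c a).1 i}) :=
        (measure_mono cover).trans (measure_iUnion_fintype_le _ _)
    _ = ∑ _c : α → Col, ((2⁻¹ : ℝ≥0∞) ^ Fintype.card α) ^ Fintype.card ι := by
        simp only [Measure.pi_pi, hμ.measure_forall_apply_eq_half_pow he, Finset.prod_const, Finset.card_univ]
    _ = _ := by
        rw [Finset.sum_const, Finset.card_univ, Fintype.card_fun, nsmul_eq_mul, mul_pow,
          ← pow_mul, ← pow_mul, mul_comm (Fintype.card α)]
        push_cast; ring

theorem IsBernoulliProduct.measure_pi_forall_ge_not_agree {ι : Type*} [Fintype ι]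
    [DecidableEq ι] {μ : Measure (ℕ → Bool)}
    (hμ : IsBernoulliProduct (fun _ : ℕ => (1 : ℝ) / 2) μ) (N : ℕ) :
    Measure.pi (fun _ : ι => μ) {S | ∀ j ≥ N, ¬ ∀ i i', S i j = S i' j} = 0 := by
  set r : ℝ≥0∞ := Fintype.card {c : ι → Bool // ¬ ∀ i i', c i = c i'} * 2⁻¹ ^ Fintype.card ι with hr_def
  have hr : r < 1 := by
    rw [hr_def, ← ENNReal.inv_pow, ← div_eq_mul_inv, ENNReal.div_lt_iff (by simp) (by simp), one_mul]
    exact_mod_cast card_nonconstant_lt_two_pow ι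
  refine le_zero_iff.1 (ge_of_tendsto' (ENNReal.tendsto_pow_atTop_nhds_zero_of_lt_one hr)
    fun m => ?_)
  calc _ ≤ Measure.pi (fun _ : ι => μ)
          {S | ∀ k : Fin m, ¬ ∀ i i', S i (N + k) = S i' (N + k)} :=
        measure_mono fun _ hS k => by exact hS (N + k) (Nat.le_add_right _ _)
    _ ≤ r ^ Fintype.card (Fin m) :=
        hμ.measure_pi_forall_not_agree_le ((add_right_injective N).comp Fin.val_injective)
    _ = r ^ m := by rw [Fintype.card_fin]

theorem IsBernoulliProduct.ae_frequently_agree {ι : Type*} [Fintype ι] [DecidableEq ι]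
    {μ : Measure (ℕ → Bool)} (hμ : IsBernoulliProduct (fun _ : ℕ => (1 : ℝ) / 2) μ) :
    ∀ᵐ S ∂(Measure.pi fun _ : ι => μ), ∃ᶠ j in atTop, ∀ i i', S i j = S i' j := by
  simp_rw [ae_iff, not_frequently, eventually_atTop, Set.ofPred_exists]
  exact measure_iUnion_null hμ.measure_pi_forall_ge_not_agree

theorem empMean_mem_Icc (n : ℕ) (S : Fin n → ℕ → Bool) (j : ℕ) :
    empMean n S j ∈ Set.Icc 0 1 := by
  rw [empMean, Finset.sum_boole]
  refine ⟨by positivity, div_le_one_of_le₀ ?_ n.cast_nonneg⟩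
  exact_mod_cast (Finset.card_filter_le _ _).trans (Finset.card_fin n).le

theorem abs_empMean_sub_half_le (n : ℕ) (S : Fin n → ℕ → Bool) (j : ℕ) :
    |empMean n S j - 1 / 2| ≤ 1 / 2 := by
  obtain ⟨h0, h1⟩ := empMean_mem_Icc n S j
  rw [abs_le]
  constructor <;> linarith

theorem abs_empMean_sub_half_of_agree {n : ℕ} {S : Fin n → ℕ → Bool} {j : ℕ}
    (h : ∀ i i', S i j = S i' j) : |empMean n S j - 1 / 2| = 1 / 2 := by
  cases n with
  | zero => norm_num [empMean]
  | succ n =>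
    simp only [empMean, fun i => h i 0]
    cases S 0 j <;> norm_num [div_self (n.cast_add_one_ne_zero (R := ℝ))]

theorem iSup_abs_empMean_sub_half {n : ℕ} {S : Fin n → ℕ → Bool}
    (h : ∃ j, ∀ i i', S i j = S i' j) : ⨆ j, |empMean n S j - 1 / 2| = 1 / 2 := by
  obtain ⟨j, hj⟩ := h
  refine le_antisymm (ciSup_le (abs_empMean_sub_half_le n S)) ?_
  exact (abs_empMean_sub_half_of_agree hj).ge.trans <| le_ciSup ⟨1 / 2, Set.forall_mem_range.2 (abs_empMean_sub_half_le n S)⟩ j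

theorem empirical_mean_fails_half_general (μ : Measure (ℕ → Bool))
    (hμ : IsBernoulliProduct (fun _ : ℕ => (1 : ℝ) / 2) μ) (n : ℕ) :
    (∀ᵐ S ∂(Measure.pi fun _ : Fin n => μ),
      {j : ℕ | ∀ i i' : Fin n, S i j = S i' j}.Infinite ∧
      (⨆ j : ℕ, |empMean n S j - 1 / 2|) = 1 / 2) ∧
    ∫ S, (⨆ j : ℕ, |empMean n S j - 1 / 2|) ∂(Measure.pi fun _ : Fin n => μ) = 1 / 2 := by
  have := hμ.1
  have hae : ∀ᵐ S ∂(Measure.pi fun _ : Fin n => μ),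
      {j : ℕ | ∀ i i' : Fin n, S i j = S i' j}.Infinite ∧
      (⨆ j : ℕ, |empMean n S j - 1 / 2|) = 1 / 2 :=
    hμ.ae_frequently_agree.mono fun S hS =>
      ⟨Nat.frequently_atTop_iff_infinite.1 hS, iSup_abs_empMean_sub_half hS.exists⟩
  refine ⟨hae, ?_⟩
  rw [integral_congr_ae (hae.mono fun S hS => hS.2), integral_const]
  simp

/-- For `μ = Prod(1/2, 1/2, …)` and any sample size `n ≥ 1`: almost surely over `n`
i.i.d. samples there are infinitely many coordinates where all `n` samples agree, hence
`sup_j |q̂_j − 1/2| = 1/2` almost surely, and consequently the expected uniform deviation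
of the empirical mean equals `1/2` — it does not converge even for the singleton
collection `{μ}`. -/
theorem empirical_mean_fails_half (μ : Measure (ℕ → Bool))
    (hμ : IsBernoulliProduct (fun _ : ℕ => (1 : ℝ) / 2) μ) (n : ℕ) (hn : 1 ≤ n) :
    (∀ᵐ S ∂(Measure.pi fun _ : Fin n => μ),
      {j : ℕ | ∀ i i' : Fin n, S i j = S i' j}.Infinite ∧
      (⨆ j : ℕ, |empMean n S j - 1 / 2|) = 1 / 2) ∧
    ∫ S, (⨆ j : ℕ, |empMean n S j - 1 / 2|) ∂(Measure.pi fun _ : Fin n => μ) = 1 / 2 :=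
  empirical_mean_fails_half_general μ hμ n
end

section
/- Let V be the vertex set of the infinite rooted binary tree (finite binary strings), let q ∈ [0,1]^V, and let X^(1),…,X^(n) be n i.i.d. samples from the product measure Prod(q) on {0,1}^V. Then with probability 1 there exists d_0 ∈ ℕ such that for all d > d_0, sup over branches b ∈ {0,1}^d of |(1/d) Σ_{j=1}^d (1/n) Σ_{i=1}^n (X^(i)_{(b_1,…,b_j)} − q_{(b_1,…,b_j)})| < 1/√n, where (b_1,…,b_j) denotes the length-j prefix of b. -/
open MeasureTheory Filter

/-- The length-`j` prefix `(b_1, …, b_j)` of an infinite branch `b ∈ {0,1}^ℕ`, as a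
vertex of the infinite binary tree (a finite binary string). -/
def pref (b : ℕ → Bool) (j : ℕ) : List Bool := List.ofFn fun k : Fin j => b k.1

open ProbabilityTheory
open scoped ENNReal NNReal

/-!
Fix a branch and a depth `d`. The `n d` centred indicators read off the samples at the first `d`
vertices of the branch are independent and bounded, hence `1/4`-sub-Gaussian, so Hoeffding's
inequality bounds the probability that their average deviates by at least `1/√n` by `2 e^{-2d}`.
The deviation at depth `d` only sees the first `d` bits of the branch, so a union bound over `2^d`
branches gives `2 (2 e^{-2})^d`, which is summable, and Borel–Cantelli concludes.
-/

theorem iIndepFun_of_measure_eq_prod {Ω K β : Type*} [MeasurableSpace Ω] [Fintype K]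
    [Countable β] [MeasurableSpace β] [MeasurableSingletonClass β]
    {μ : Measure Ω} [IsProbabilityMeasure μ] {Z : K → Ω → β} (hZ : ∀ k, Measurable (Z k))
    (h : ∀ g : K → β, μ {ω | ∀ k, Z k ω = g k} = ∏ k, μ {ω | Z k ω = g k}) :
    iIndepFun Z μ := by
  rw [iIndepFun_iff_map_fun_eq_pi_map fun k => (hZ k).aemeasurable]
  refine Measure.ext_of_singleton fun g => ?_
  rw [Measure.map_apply (measurable_pi_lambda _ hZ) (measurableSet_singleton g),
    ← Set.univ_pi_singleton, Measure.pi_pi]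
  simp_rw [Measure.map_apply (hZ _) (measurableSet_singleton _)]
  convert h g using 2 with k
  · ext ω
    simp
  · rfl

theorem hasSubgaussianMGF_ite_sub_measureReal {Ω : Type*} [MeasurableSpace Ω] {μ : Measure Ω}
    [IsProbabilityMeasure μ] {Z : Ω → Bool} (hZ : Measurable Z) :
    HasSubgaussianMGF (fun ω => (if Z ω then (1 : ℝ) else 0) - μ.real {ω | Z ω = true})
      (1 / 4) μ := by
  have hX : Measurable fun ω => if Z ω then (1 : ℝ) else 0 :=
    (measurable_of_finite fun b : Bool => if b then (1 : ℝ) else 0).comp hZ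
  have hmean : μ[fun ω => if Z ω then (1 : ℝ) else 0] = μ.real {ω | Z ω = true} := by
    rw [← integral_indicator_one (s := {ω | Z ω = true}) (hZ (measurableSet_singleton true))]
    congr with ω
    cases h : Z ω <;> simp [h]
  have h := hasSubgaussianMGF_of_mem_Icc (μ := μ) (a := 0) (b := 1) hX.aemeasurable
    (ae_of_all _ fun ω => by split <;> simp)
  rw [hmean] at h
  convert h using 1
  norm_num

theorem measureReal_abs_sum_ge_le_of_iIndepFun {Ω ι : Type*} [MeasurableSpace Ω] {μ : Measure Ω}
    [IsFiniteMeasure μ] {X : ι → Ω → ℝ} (h_indep : iIndepFun X μ) {c : ι → ℝ≥0}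
    {s : Finset ι} (h_subG : ∀ i ∈ s, HasSubgaussianMGF (X i) (c i) μ) {ε : ℝ} (hε : 0 ≤ ε) :
    μ.real {ω | ε ≤ |∑ i ∈ s, X i ω|} ≤ 2 * Real.exp (-ε ^ 2 / (2 * ∑ i ∈ s, c i)) := by
  have h_neg : μ.real {ω | ε ≤ ∑ i ∈ s, -X i ω} ≤ Real.exp (-ε ^ 2 / (2 * ∑ i ∈ s, c i)) :=
    HasSubgaussianMGF.measure_sum_ge_le_of_iIndepFun (X := fun i => -X i)
      (h_indep.comp (fun _ => Neg.neg) fun _ => measurable_neg) (fun i hi => (h_subG i hi).neg) hε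
  have h_pos := HasSubgaussianMGF.measure_sum_ge_le_of_iIndepFun h_indep h_subG hε
  calc μ.real {ω | ε ≤ |∑ i ∈ s, X i ω|}
      ≤ μ.real ({ω | ε ≤ ∑ i ∈ s, X i ω} ∪ {ω | ε ≤ ∑ i ∈ s, -X i ω}) := by
        refine measureReal_mono (fun ω hω => ?_)
        simp only [Set.mem_union, Set.mem_ofPred_eq, Finset.sum_neg_distrib] at hω ⊢
        exact le_abs.mp hω
    _ ≤ _ := (measureReal_union_le _ _).trans (by linarith)

namespace IsBernoulliProduct

variable {ι : Type*} {q : ι → ℝ} {μ : Measure (ι → Bool)}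

theorem measure_cylinder {κ : Type*} [Fintype κ] (hμ : IsBernoulliProduct q μ) {v : κ → ι}
    (hv : v.Injective) (a : κ → Bool) :
    μ {x | ∀ j, x (v j) = a j} = ∏ j, ENNReal.ofReal (if a j then q (v j) else 1 - q (v j)) := by
  have h := hμ.2 (Finset.univ.map ⟨v, hv⟩) (Function.extend v a fun _ => false)
  simp only [Finset.prod_map, Function.Embedding.coeFn_mk, hv.extend_apply] at h
  rw [← h]
  congr with x
  simp [hv.extend_apply]

theorem measure_eval (hμ : IsBernoulliProduct q μ) (v : ι) (b : Bool) :
    μ {x | x v = b} = ENNReal.ofReal (if b then q v else 1 - q v) := by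
  simpa using hμ.2 {v} fun _ => b

theorem measure_pi_eval (hμ : IsBernoulliProduct q μ) {m : Type*} [Fintype m] (i : m) (v : ι)
    (b : Bool) : (Measure.pi fun _ : m => μ) {S | S i v = b} =
      ENNReal.ofReal (if b then q v else 1 - q v) := by
  have := hμ.1
  rw [← hμ.measure_eval v b]
  exact (measurePreserving_eval (fun _ : m => μ) i).measure_preimage
    ((measurable_pi_apply v) (measurableSet_singleton b)).nullMeasurableSet

theorem iIndepFun_pi {m κ : Type*} [Fintype m] [Fintype κ] (hμ : IsBernoulliProduct q μ)
    {v : κ → ι} (hv : v.Injective) :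
    iIndepFun (fun (k : m × κ) (S : m → ι → Bool) => S k.1 (v k.2))
      (Measure.pi fun _ : m => μ) := by
  have := hμ.1
  refine iIndepFun_of_measure_eq_prod (fun k => by fun_prop) fun g => ?_
  have hbox : {S : m → ι → Bool | ∀ k : m × κ, S k.1 (v k.2) = g k} =
      Set.univ.pi fun i => {x | ∀ j, x (v j) = g (i, j)} := by
    ext S; simp [Prod.forall]
  simp_rw [hbox, Measure.pi_pi, hμ.measure_cylinder hv, hμ.measure_pi_eval, Fintype.prod_prod_type]

end IsBernoulliProduct

noncomputable def branchDeviation (q : List Bool → ℝ) {n : ℕ} (S : Fin n → List Bool → Bool)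
    (d : ℕ) (b : ℕ → Bool) : ℝ :=
  (1 / (d : ℝ)) * ∑ j ∈ Finset.range d,
    (1 / (n : ℝ)) * ∑ i : Fin n,
      ((if S i (pref b (j + 1)) then (1 : ℝ) else 0) - q (pref b (j + 1)))

theorem pref_injective (b : ℕ → Bool) : (pref b).Injective := fun j j' h => by
  simpa [pref] using congrArg List.length h

theorem pref_congr {b b' : ℕ → Bool} {j : ℕ} (h : ∀ k < j, b k = b' k) :
    pref b j = pref b' j := by
  simp only [pref, List.ofFn_inj]
  exact funext fun k => h k k.2

theorem branchDeviation_congr (q : List Bool → ℝ) {n : ℕ} (S : Fin n → List Bool → Bool)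
    {d : ℕ} {b b' : ℕ → Bool} (h : ∀ k < d, b k = b' k) :
    branchDeviation q S d b = branchDeviation q S d b' := by
  unfold branchDeviation
  congr 1
  refine Finset.sum_congr rfl fun j hj => ?_
  rw [pref_congr fun k hk => h k (by simp at hj; omega)]

theorem branchDeviation_eq (q : List Bool → ℝ) {n : ℕ} (S : Fin n → List Bool → Bool) (d : ℕ)
    (b : ℕ → Bool) :
    branchDeviation q S d b = ((d : ℝ) * n)⁻¹ * ∑ k : Fin n × Fin d,
      ((if S k.1 (pref b (k.2 + 1)) then (1 : ℝ) else 0) - q (pref b (k.2 + 1))) := by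
  rw [branchDeviation, Finset.sum_range, ← Finset.mul_sum, Fintype.sum_prod_type,
    Finset.sum_comm]
  ring

theorem setOf_not_abs_branchDeviation_lt_subset (q : List Bool → ℝ) {n : ℕ} (hn : 1 ≤ n)
    (d : ℕ) (b : ℕ → Bool) :
    {S : Fin n → List Bool → Bool | ¬ |branchDeviation q S d b| < 1 / Real.sqrt n} ⊆
      {S | d * Real.sqrt n ≤ |∑ k : Fin n × Fin d,
        ((if S k.1 (pref b (k.2 + 1)) then (1 : ℝ) else 0) - q (pref b (k.2 + 1)))|} := by
  intro S (h : ¬ |branchDeviation q S d b| < 1 / Real.sqrt n)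
  show (d : ℝ) * Real.sqrt n ≤ _
  rcases Nat.eq_zero_or_pos d with rfl | hd
  · simp
  have hn' : (0 : ℝ) < n := by exact_mod_cast hn
  have hsqrt : 0 < Real.sqrt n := Real.sqrt_pos.mpr hn'
  rw [branchDeviation_eq, abs_mul, abs_of_pos (by positivity), not_lt, ← div_eq_inv_mul,
    le_div_iff₀ (by positivity)] at h
  calc d * Real.sqrt n = 1 / Real.sqrt n * (d * n) := by
        field_simp; rw [Real.sq_sqrt hn'.le]
    _ ≤ _ := h

theorem measure_not_abs_branchDeviation_lt_le {q : List Bool → ℝ}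
    (hq : ∀ v, 0 ≤ q v) {μ : Measure (List Bool → Bool)}
    (hμ : IsBernoulliProduct q μ) {n : ℕ} (hn : 1 ≤ n) (d : ℕ) (b : ℕ → Bool) :
    (Measure.pi fun _ : Fin n => μ) {S | ¬ |branchDeviation q S d b| < 1 / Real.sqrt n}
      ≤ ENNReal.ofReal (2 * Real.exp (-2 * d)) := by
  have := hμ.1
  have hv : (fun j : Fin d => pref b (j + 1)).Injective :=
    (pref_injective b).comp ((add_left_injective 1).comp Fin.val_injective)
  have h_indep := (hμ.iIndepFun_pi (m := Fin n) hv).comp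
    (fun k x => (if x then (1 : ℝ) else 0) - q (pref b (k.2 + 1))) fun _ => measurable_of_finite _
  have h_subG : ∀ k ∈ (Finset.univ : Finset (Fin n × Fin d)), HasSubgaussianMGF
      (fun S : Fin n → List Bool → Bool =>
        (if S k.1 (pref b (k.2 + 1)) then (1 : ℝ) else 0) - q (pref b (k.2 + 1)))
      (1 / 4) (Measure.pi fun _ : Fin n => μ) := by
    intro k _
    have hmean : (Measure.pi fun _ : Fin n => μ).real {S | S k.1 (pref b (k.2 + 1)) = true} =
        q (pref b (k.2 + 1)) := by
      simp [Measure.real, hμ.measure_pi_eval, hq]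
    simpa [hmean] using hasSubgaussianMGF_ite_sub_measureReal
      (μ := Measure.pi fun _ : Fin n => μ) (Z := fun S => S k.1 (pref b (k.2 + 1))) (by fun_prop)
  have hε : (0 : ℝ) ≤ d * Real.sqrt n := by positivity
  refine (measure_mono (setOf_not_abs_branchDeviation_lt_subset q hn d b)).trans ?_
  rw [← ENNReal.ofReal_toReal (measure_ne_top _ _)]
  refine ENNReal.ofReal_le_ofReal
    ((measureReal_abs_sum_ge_le_of_iIndepFun h_indep h_subG hε).trans_eq ?_)
  rcases Nat.eq_zero_or_pos d with rfl | hd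
  · simp
  have hn' : (0 : ℝ) < n := by exact_mod_cast hn
  simp only [Finset.sum_const, Finset.card_univ, Fintype.card_prod, Fintype.card_fin, nsmul_eq_mul]
  push_cast
  rw [mul_pow, Real.sq_sqrt hn'.le]
  congr 2
  field_simp
  ring

theorem measure_exists_not_abs_branchDeviation_lt_le {q : List Bool → ℝ}
    (hq : ∀ v, 0 ≤ q v) {μ : Measure (List Bool → Bool)}
    (hμ : IsBernoulliProduct q μ) {n : ℕ} (hn : 1 ≤ n) (d : ℕ) :
    (Measure.pi fun _ : Fin n => μ)
        {S | ∃ b : ℕ → Bool, ¬ |branchDeviation q S d b| < 1 / Real.sqrt n}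
      ≤ ENNReal.ofReal (2 * (2 * Real.exp (-2)) ^ d) := by
  let extend (c : Fin d → Bool) (k : ℕ) : Bool := if h : k < d then c ⟨k, h⟩ else false
  have hsub : {S : Fin n → List Bool → Bool |
        ∃ b : ℕ → Bool, ¬ |branchDeviation q S d b| < 1 / Real.sqrt n} ⊆
      ⋃ c : Fin d → Bool, {S | ¬ |branchDeviation q S d (extend c)| < 1 / Real.sqrt n} := by
    rintro S ⟨b, hb⟩
    refine Set.mem_iUnion.2 ⟨fun k => b k, ?_⟩
    rwa [Set.mem_ofPred_eq, branchDeviation_congr q S (b' := b) fun k hk => by simp [extend, hk]]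
  calc _ ≤ ∑ c : Fin d → Bool, (Measure.pi fun _ : Fin n => μ)
          {S | ¬ |branchDeviation q S d (extend c)| < 1 / Real.sqrt n} :=
        (measure_mono hsub).trans (measure_iUnion_fintype_le _ _)
    _ ≤ ∑ _c : Fin d → Bool, ENNReal.ofReal (2 * Real.exp (-2 * d)) :=
        Finset.sum_le_sum fun c _ => measure_not_abs_branchDeviation_lt_le hq hμ hn d (extend c)
    _ = ENNReal.ofReal (2 * (2 * Real.exp (-2)) ^ d) := by
        rw [Finset.sum_const, Finset.card_univ, Fintype.card_fun, Fintype.card_bool,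
          Fintype.card_fin, nsmul_eq_mul, ← ENNReal.ofReal_natCast, ← ENNReal.ofReal_mul
          (by positivity), mul_pow, ← Real.exp_nat_mul]
        push_cast
        ring_nf

/-- For any `q ∈ [0,1]^V` (`V` the vertices of the infinite binary tree) and `n ≥ 1`
i.i.d. samples from `Prod q`: almost surely there is a depth `d₀` such that for all
`d > d₀`, uniformly over all branches, the averaged empirical deviation along the first
`d` levels of the branch is less than `1/√n`. -/
theorem tree_uniform_deviation (q : List Bool → ℝ)
    (hq : ∀ v, q v ∈ Set.Icc (0 : ℝ) 1)
    (μ : Measure (List Bool → Bool)) (hμ : IsBernoulliProduct q μ)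
    (n : ℕ) (hn : 1 ≤ n) :
    ∀ᵐ S ∂(Measure.pi fun _ : Fin n => μ),
      ∃ d₀ : ℕ, ∀ d > d₀, ∀ b : ℕ → Bool,
        |(1 / (d : ℝ)) * ∑ j ∈ Finset.range d,
            (1 / (n : ℝ)) * ∑ i : Fin n,
              ((if S i (pref b (j + 1)) then (1 : ℝ) else 0) - q (pref b (j + 1)))|
          < 1 / Real.sqrt n := by
  have hr : 2 * Real.exp (-2) < 1 := by
    have : 2 + 1 < Real.exp 2 := Real.add_one_lt_exp two_ne_zero
    rw [Real.exp_neg, ← div_eq_mul_inv, div_lt_one (Real.exp_pos 2)]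
    linarith
  have hsum : ∑' d, (Measure.pi fun _ : Fin n => μ)
      {S | ∃ b : ℕ → Bool, ¬ |branchDeviation q S d b| < 1 / Real.sqrt n} ≠ ∞ := by
    refine ne_top_of_le_ne_top ?_ (ENNReal.tsum_le_tsum
      (measure_exists_not_abs_branchDeviation_lt_le (fun v => (hq v).1) hμ hn))
    rw [← ENNReal.ofReal_tsum_of_nonneg (fun d => by positivity)
      ((summable_geometric_of_lt_one (by positivity) hr).mul_left 2)]
    exact ENNReal.ofReal_ne_top
  filter_upwards [ae_eventually_notMem hsum] with S hS
  obtain ⟨d₀, hd₀⟩ := eventually_atTop.1 hS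
  exact ⟨d₀, fun d hd b => not_not.1 fun h => hd₀ d hd.le ⟨b, h⟩⟩
end
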